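/- Let G be a connected graph with at least 2 vertices that has a cut vertex (a vertex whose removal disconnects G). Then the minimum size of a connecting transition set of G is exactly |V(G)| − 2. -/

import Mathlib

/-!
Upper bound: fix a root `r`, a neighbour `m` of `r`, and for every other vertex a parent one step
closer to `r`. Each vertex `v ∉ {r, m}` contributes the one turn at its parent that continues to
the grandparent (to `m` when the parent is `r`). Following these turns, and turning back at `m`,
every vertex reaches the dart `rm` by a compatible walk; reversing such walks joins any two
vertices, with `|V| - 2` turns.

Lower bound: a turn `abc` records the shortcut `ac` on `V ∖ {p}`, or `bc` when `a = p`, which gives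
a graph with at most `|T|` edges. A compatible walk leaving the edge `pb` only meets vertices in
the shortcut component of `b`, so two vertices separated in `G - p` are joined in the shortcut graph
through the first visit of a compatible walk to `p`. As `G - p` is disconnected, the shortcut graph
is connected, hence has at least `|V| - 2` edges.
-/

variable {V : Type*}

/-- The transition consisting of the edges `ab` and `bc`, written `abc`. -/
def transitionOf (a b c : V) : Sym2 (Sym2 V) := s(s(a, b), s(b, c))

/-- `t` is a transition of `G`: an unordered pair of two distinct adjacent edges. -/
def SimpleGraph.IsTransition (G : SimpleGraph V) (t : Sym2 (Sym2 V)) : Prop :=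
  ∃ a b c, G.Adj a b ∧ G.Adj b c ∧ a ≠ c ∧ t = transitionOf a b c

/-- A list of vertices (the support of a walk) is `T`-compatible: every pair of
consecutive edges is either a transition of `T` or a backtrack. -/
def TCompatible (T : Set (Sym2 (Sym2 V))) (l : List V) : Prop :=
  ∀ (i : ℕ) (h : i + 2 < l.length),
    l[i]'(by omega) = l[i + 2]'h ∨
    transitionOf (l[i]'(by omega)) (l[i + 1]'(by omega)) (l[i + 2]'h) ∈ T

/-- `G` is `T`-connected: every two vertices are joined by a `T`-compatible walk. -/
def SimpleGraph.TConnected (G : SimpleGraph V) (T : Set (Sym2 (Sym2 V))) : Prop :=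
  ∀ u v : V, ∃ p : G.Walk u v, TCompatible T p.support

/-- `T` is a connecting transition set of `G`. -/
def SimpleGraph.ConnectingTransitionSet (G : SimpleGraph V)
    (T : Finset (Sym2 (Sym2 V))) : Prop :=
  (∀ t ∈ T, G.IsTransition t) ∧ G.TConnected ↑T

/-- `H` is a connecting hypergraph of `G`: every hyperedge has at least two vertices and
induces a connected subgraph, and every pair of distinct non-adjacent vertices is
contained in a common hyperedge. -/
def SimpleGraph.ConnectingHypergraph (G : SimpleGraph V) (H : Finset (Finset V)) : Prop :=
  (∀ E ∈ H, 2 ≤ E.card ∧ (G.induce (E : Set V)).Connected) ∧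
  ∀ u v : V, u ≠ v → ¬G.Adj u v → ∃ E ∈ H, u ∈ E ∧ v ∈ E

/-- The cost of a hypergraph: the sum over hyperedges of (size − 2). -/
def hcost (H : Finset (Finset V)) : ℕ := ∑ E ∈ H, (E.card - 2)

/-- The quantity τ(G): the sum over co-connected components `C` of `G` with `|C| ≥ 2`
of `|C| − 2` if `G[C]` is connected and `|C| − 1` otherwise. -/
noncomputable def tau {V : Type*} [Fintype V] (G : SimpleGraph V) : ℕ := by
  classical
  haveI : Fintype Gᶜ.ConnectedComponent := Fintype.ofFinite _
  exact ∑ C : Gᶜ.ConnectedComponent,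
    if 2 ≤ C.supp.ncard then
      (if (G.induce C.supp).Connected then C.supp.ncard - 2 else C.supp.ncard - 1)
    else 0

lemma transitionOf_comm (a b c : V) : transitionOf a b c = transitionOf c b a := by
  simp [transitionOf, Sym2.eq_swap]

lemma transitionOf_eq_transitionOf_iff {a b c x y z : V} (hac : a ≠ c) :
    transitionOf x y z = transitionOf a b c ↔
      x = a ∧ y = b ∧ z = c ∨ x = c ∧ y = b ∧ z = a := by
  constructor
  · simp only [transitionOf, Sym2.eq_iff]
    grind
  · rintro (⟨rfl, rfl, rfl⟩ | ⟨rfl, rfl, rfl⟩)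
    · rfl
    · exact transitionOf_comm _ _ _

lemma tCompatible_of_length_le_two {T : Set (Sym2 (Sym2 V))} {l : List V} (hl : l.length ≤ 2) :
    TCompatible T l :=
  fun i h => absurd h (by omega)

lemma tCompatible_cons_cons_cons {T : Set (Sym2 (Sym2 V))} {a b c : V} {l : List V} :
    TCompatible T (a :: b :: c :: l) ↔
      (a = c ∨ transitionOf a b c ∈ T) ∧ TCompatible T (b :: c :: l) := by
  constructor
  · intro h
    exact ⟨h 0 (by simp), fun i hi => h (i + 1) (by simpa using hi)⟩
  · rintro ⟨h₀, h⟩ (_ | i) hi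
    · exact h₀
    · exact h i (by simpa using hi)

def IsShortcut (p : V) (t : Sym2 (Sym2 V)) (a c : V) : Prop :=
  (∃ b, t = transitionOf a b c) ∨ t = transitionOf p a c

lemma IsShortcut.sym2_eq {p : V} {t : Sym2 (Sym2 V)} {a c a' c' : V}
    (h : IsShortcut p t a c) (h' : IsShortcut p t a' c') (hac : a ≠ c)
    (ha : a ≠ p) (hc : c ≠ p) (ha' : a' ≠ p) (hc' : c' ≠ p) : s(a, c) = s(a', c') := by
  rcases h with ⟨b, rfl⟩ | rfl <;> rcases h' with ⟨b', h'⟩ | h'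
  · rw [eq_comm, transitionOf_eq_transitionOf_iff hac] at h'
    grind [Sym2.eq_swap]
  · rw [eq_comm, transitionOf_eq_transitionOf_iff hac] at h'
    grind
  · rw [eq_comm, transitionOf_eq_transitionOf_iff hc.symm] at h'
    grind
  · rw [eq_comm, transitionOf_eq_transitionOf_iff hc.symm] at h'
    grind

namespace SimpleGraph

lemma Preconnected.of_not_reachable_imp {W : Type*} {H K : SimpleGraph W}
    (hH : ¬H.Preconnected) (hK : ∀ u v, ¬H.Reachable u v → K.Reachable u v) :
    K.Preconnected := by
  intro u v
  by_cases huv : H.Reachable u v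
  · obtain ⟨a, b, hab⟩ : ∃ a b, ¬H.Reachable a b := by simpa [Preconnected] using hH
    by_cases hua : H.Reachable u a
    · have hub : ¬H.Reachable u b := fun h => hab (hua.symm.trans h)
      exact (hK u b hub).trans (hK v b fun h => hub (huv.trans h)).symm
    · exact (hK u a hua).trans (hK v a fun h => hua (huv.trans h)).symm
  · exact hK u v huv

lemma Connected.exists_adj_dist_lt {G : SimpleGraph V} (hc : G.Connected) {v r : V}
    (hv : v ≠ r) : ∃ w, G.Adj v w ∧ G.dist w r < G.dist v r := by
  obtain ⟨q, hq⟩ := hc.exists_walk_length_eq_dist v r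
  cases q with
  | nil => exact absurd rfl hv
  | cons h q => exact ⟨_, h, (dist_le q).trans_lt (by simp [← hq])⟩

variable (G : SimpleGraph V) (T : Set (Sym2 (Sym2 V)))

/-- `T`-compatible walks of positive length are the chains of darts under this relation. -/
def TStep (d d' : G.Dart) : Prop :=
  d.snd = d'.fst ∧ (d.fst = d'.snd ∨ transitionOf d.fst d.snd d'.snd ∈ T)

variable {G T}

lemma tStep_symm (d : G.Dart) : G.TStep T d d.symm :=
  ⟨rfl, Or.inl rfl⟩

lemma TStep.symm {d d' : G.Dart} (h : G.TStep T d d') : G.TStep T d'.symm d.symm := by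
  obtain ⟨hmid, hturn⟩ := h
  refine ⟨hmid.symm, ?_⟩
  simp only [Dart.symm_toProd, Prod.fst_swap, Prod.snd_swap, ← hmid]
  rw [transitionOf_comm]
  exact hturn.imp Eq.symm id

lemma reflTransGen_tStep_symm {d d' : G.Dart} (h : Relation.ReflTransGen (G.TStep T) d d') :
    Relation.ReflTransGen (G.TStep T) d'.symm d.symm :=
  Relation.reflTransGen_swap.mp (h.lift Dart.symm fun _ _ h => h.symm)

lemma exists_walk_of_reflTransGen_tStep {d d' : G.Dart}
    (h : Relation.ReflTransGen (G.TStep T) d d') :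
    ∃ w : G.Walk d.snd d'.snd, TCompatible T (d.fst :: w.support) := by
  induction h using Relation.ReflTransGen.head_induction_on with
  | refl => exact ⟨.nil, tCompatible_of_length_le_two (by simp)⟩
  | @head d d₁ hstep _ ih =>
    obtain ⟨w, hw⟩ := ih
    obtain ⟨hmid, hturn⟩ := hstep
    refine ⟨.cons (hmid ▸ d₁.adj) w, ?_⟩
    rw [← w.cons_tail_support] at hw
    rw [Walk.support_cons, ← w.cons_tail_support]
    exact tCompatible_cons_cons_cons.mpr ⟨hturn, hmid ▸ hw⟩

lemma Walk.exists_reflTransGen_tStep {u v x : V} (h : G.Adj u v) (w : G.Walk v x)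
    (hw : TCompatible T (u :: w.support)) :
    ∃ d : G.Dart, d.snd = x ∧ Relation.ReflTransGen (G.TStep T) ⟨(u, v), h⟩ d := by
  induction w generalizing u with
  | nil => exact ⟨_, rfl, .refl⟩
  | @cons v v' x h' w ih =>
    rw [Walk.support_cons, ← w.cons_tail_support, tCompatible_cons_cons_cons,
      w.cons_tail_support] at hw
    obtain ⟨d, hd, hchain⟩ := ih h' hw.2
    exact ⟨d, hd, .head ⟨rfl, hw.1⟩ hchain⟩

lemma tConnected_of_forall_reflTransGen_tStep (hub : G.Dart)
    (h : ∀ u, ∃ d : G.Dart, d.fst = u ∧ Relation.ReflTransGen (G.TStep T) d hub) :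
    G.TConnected T := by
  intro u v
  obtain ⟨du, rfl, hu⟩ := h u
  obtain ⟨dv, rfl, hv⟩ := h v
  obtain ⟨w, hw⟩ := exists_walk_of_reflTransGen_tStep
    ((hu.tail (tStep_symm hub)).trans (reflTransGen_tStep_symm hv))
  exact ⟨.cons du.adj w, hw⟩

lemma tConnected_of_parent {r m : V} (hm : G.Adj r m) (par : V → V)
    (hpar : ∀ v, v ≠ r → G.Adj v (par v) ∧ G.dist (par v) r < G.dist v r)
    (hroot : ∀ v, v ≠ r → v ≠ m → par v = r → transitionOf v r m ∈ T)
    (hgrand : ∀ v, v ≠ r → v ≠ m → par v ≠ r → transitionOf v (par v) (par (par v)) ∈ T) :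
    G.TConnected T := by
  let hub : G.Dart := ⟨(r, m), hm⟩
  have hparm : par m = r := by
    have hreach := (hpar m hm.ne.symm).1.symm.reachable.trans hm.symm.reachable
    have := (hpar m hm.ne.symm).2
    rwa [dist_eq_one_iff_adj.mpr hm.symm, Nat.lt_one_iff, hreach.dist_eq_zero_iff] at this
  have key : ∀ k v (hv : v ≠ r), G.dist v r = k →
      Relation.ReflTransGen (G.TStep T) ⟨(v, par v), (hpar v hv).1⟩ hub := by
    intro k
    induction k using Nat.strong_induction_on with
    | _ k ih =>
    intro v hv hk
    by_cases hvm : v = m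
    · subst hvm
      exact .single ⟨hparm, Or.inl rfl⟩
    by_cases hpv : par v = r
    · exact .single ⟨hpv, Or.inr (hpv ▸ hroot v hv hvm hpv)⟩
    · exact .head ⟨rfl, Or.inr (hgrand v hv hvm hpv)⟩
        (ih _ (hk ▸ (hpar v hv).2) (par v) hpv rfl)
  refine tConnected_of_forall_reflTransGen_tStep hub fun u => ?_
  by_cases hu : u = r
  · exact ⟨hub, hu.symm, .refl⟩
  · exact ⟨_, rfl, key _ u hu rfl⟩

open Finset in
theorem Connected.exists_connectingTransitionSet_card_le [Fintype V] (hc : G.Connected) :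
    ∃ T : Finset (Sym2 (Sym2 V)), G.ConnectingTransitionSet T ∧ T.card ≤ Fintype.card V - 2 := by
  classical
  obtain ⟨r⟩ := hc.nonempty
  by_cases hr : ∃ m, G.Adj r m
  swap
  · have hsub : ∀ v, v = r := fun v => by
      obtain ⟨w⟩ := hc.preconnected r v
      cases w with
      | nil => rfl
      | cons h _ => exact absurd ⟨_, h⟩ hr
    refine ⟨∅, ⟨by simp, fun u v => ?_⟩, by simp⟩
    obtain rfl := hsub u
    obtain rfl := hsub v
    exact ⟨.nil, tCompatible_of_length_le_two (by simp)⟩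
  obtain ⟨m, hm⟩ := hr
  choose! par hpar using fun v (hv : v ≠ r) => hc.exists_adj_dist_lt hv
  let turn v := transitionOf v (par v) (if par v = r then m else par (par v))
  have hturn : ∀ v, v ≠ r → v ≠ m → turn v ∈ ((univ.erase r).erase m).image turn :=
    fun v hv hvm => mem_image_of_mem _ (by simp [hv, hvm])
  refine ⟨((univ.erase r).erase m).image turn, ⟨?_, ?_⟩, ?_⟩
  · simp only [mem_image, mem_erase, mem_univ, and_true]
    rintro _ ⟨v, ⟨hvm, hv⟩, rfl⟩
    by_cases hpv : par v = r
    · exact ⟨v, r, m, hpv ▸ (hpar v hv).1, hm, hvm, by simp [turn, hpv]⟩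
    · refine ⟨v, par v, par (par v), (hpar v hv).1, (hpar _ hpv).1, fun h => ?_,
        by simp [turn, hpv]⟩
      have := (hpar _ hpv).2.trans (hpar v hv).2
      rw [← h] at this
      exact lt_irrefl _ this
  · refine tConnected_of_parent hm par hpar (fun v hv hvm hpv => ?_) (fun v hv hvm hpv => ?_)
    · exact (show turn v = transitionOf v r m by simp [turn, hpv]) ▸ hturn v hv hvm
    · exact (show turn v = transitionOf v (par v) (par (par v)) by simp [turn, hpv]) ▸
        hturn v hv hvm
  · calc _ ≤ ((univ.erase r).erase m).card := card_image_le
      _ = Fintype.card V - 2 := by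
        rw [card_erase_of_mem (by simp [hm.ne.symm]), card_erase_of_mem (mem_univ r), card_univ]
        rfl

def shortcutGraph (T : Set (Sym2 (Sym2 V))) (p : V) : SimpleGraph {v : V | v ≠ p} :=
  fromRel fun a c => ∃ t ∈ T, IsShortcut p t a c

lemma card_edgeSet_shortcutGraph_le (T : Finset (Sym2 (Sym2 V))) (p : V) :
    Nat.card (shortcutGraph ↑T p).edgeSet ≤ T.card := by
  have hrec : ∀ e ∈ (shortcutGraph ↑T p).edgeSet, ∃ t ∈ T, ∃ a c : {v : V | v ≠ p},
      e = s(a, c) ∧ a ≠ c ∧ IsShortcut p t a c := by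
    intro e
    induction e using Sym2.ind with
    | _ a c =>
    rintro ⟨hne, ⟨t, ht, h⟩ | ⟨t, ht, h⟩⟩
    · exact ⟨t, ht, a, c, rfl, hne, h⟩
    · exact ⟨t, ht, c, a, Sym2.eq_swap, hne.symm, h⟩
  choose f hfT hf using fun e : (shortcutGraph ↑T p).edgeSet => hrec e e.2
  rw [← Nat.card_eq_finsetCard]
  refine Nat.card_le_card_of_injective (fun e => ⟨f e, hfT e⟩) fun e e' hee' => ?_
  obtain ⟨a, c, he, hac, h⟩ := hf e
  obtain ⟨a', c', he', -, h'⟩ := hf e'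
  rw [Subtype.mk.injEq] at hee'
  rw [hee'] at h
  have := h.sym2_eq h' (Subtype.val_injective.ne hac) a.2 c.2 a'.2 c'.2
  rw [← Sym2.map_mk, ← Sym2.map_mk] at this
  exact Subtype.ext ((he.trans (Sym2.map.injective Subtype.val_injective this)).trans he'.symm)

section CutVertex

variable {p : V}

lemma reachable_shortcutGraph_of_reflTransGen_tStep {b : {v : V | v ≠ p}} {d d' : G.Dart}
    (h : Relation.ReflTransGen (G.TStep T) d d') (hd : d.edge = s(p, b.1))
    {v : {v : V | v ≠ p}} (hv : v.1 ∈ d'.edge) : (shortcutGraph T p).Reachable b v := by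
  induction h generalizing v with
  | refl =>
    rw [hd, Sym2.mem_iff] at hv
    obtain hvp | hvb := hv
    · exact absurd hvp v.2
    · rw [Subtype.ext hvb]
  | @tail e e' _ hstep ih =>
    obtain ⟨hmid, hturn⟩ := hstep
    rw [Dart.edge, Sym2.mem_iff, ← hmid] at hv
    obtain hv | hv := hv
    · exact ih (hv ▸ Sym2.mem_mk_right _ _)
    by_cases hback : e.fst = e'.snd
    · exact ih (hv ▸ hback ▸ Sym2.mem_mk_left _ _)
    have hturn := hturn.resolve_left hback
    have hne : e.snd ≠ e'.snd := hmid ▸ e'.adj.ne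
    by_cases hfp : e.fst = p
    · let a : {v : V | v ≠ p} := ⟨e.snd, hfp ▸ e.adj.ne.symm⟩
      refine (ih (v := a) (Sym2.mem_mk_right _ _)).trans (Adj.reachable ?_)
      exact ⟨Subtype.coe_ne_coe.mp (by rw [hv]; exact hne),
        Or.inl ⟨_, hturn, Or.inr (by rw [hfp, hv])⟩⟩
    · let a : {v : V | v ≠ p} := ⟨e.fst, hfp⟩
      refine (ih (v := a) (Sym2.mem_mk_left _ _)).trans (Adj.reachable ?_)
      exact ⟨Subtype.coe_ne_coe.mp (by rw [hv]; exact hback),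
        Or.inl ⟨_, hturn, Or.inl ⟨_, by rw [hv]⟩⟩⟩

lemma reachable_induce_or_exists_reflTransGen_tStep {d d' : G.Dart}
    (h : Relation.ReflTransGen (G.TStep T) d d') (hd : d.fst ≠ p) (hd' : d'.snd ≠ p) :
    (G.induce {v | v ≠ p}).Reachable ⟨d.fst, hd⟩ ⟨d'.snd, hd'⟩ ∨
      ∃ e : G.Dart, e.snd = p ∧ Relation.ReflTransGen (G.TStep T) d e ∧
        Relation.ReflTransGen (G.TStep T) e d' := by
  induction h with
  | refl => exact Or.inl (Adj.reachable d.adj)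
  | @tail e e' hde hstep ih =>
    by_cases he : e.snd = p
    · exact Or.inr ⟨e, he, hde, .single hstep⟩
    refine (ih he).imp (fun h => h.trans (Adj.reachable ?_)) fun ⟨e₀, he₀, h₀, h₁⟩ =>
      ⟨e₀, he₀, h₀, h₁.tail hstep⟩
    exact show G.Adj e.snd e'.snd from hstep.1 ▸ e'.adj

lemma TConnected.reachable_shortcutGraph (hT : G.TConnected T) {u x : {v : V | v ≠ p}}
    (hux : ¬(G.induce {v | v ≠ p}).Reachable u x) : (shortcutGraph T p).Reachable u x := by
  obtain ⟨w, hw⟩ := hT u x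
  obtain ⟨v, huv, w, rfl⟩ := Walk.exists_eq_cons_of_ne (fun h => hux (by rw [Subtype.ext h])) w
  obtain ⟨x, hx⟩ := x
  obtain ⟨d', rfl, hchain⟩ := Walk.exists_reflTransGen_tStep huv w hw
  obtain hreach | ⟨e, hep, h₀, h₁⟩ := reachable_induce_or_exists_reflTransGen_tStep hchain u.2 hx
  · exact absurd hreach hux
  let a : {v : V | v ≠ p} := ⟨e.fst, hep ▸ e.adj.ne⟩
  have hea : e.edge = s(p, a.1) := by
    show s(e.fst, e.snd) = s(p, e.fst)
    rw [hep, Sym2.eq_swap]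
  exact (reachable_shortcutGraph_of_reflTransGen_tStep (reflTransGen_tStep_symm h₀)
    (e.edge_symm ▸ hea) (Sym2.mem_mk_right _ _)).symm.trans
    (reachable_shortcutGraph_of_reflTransGen_tStep h₁ hea (Sym2.mem_mk_right _ _))

theorem TConnected.card_sub_two_le [Fintype V] {T : Finset (Sym2 (Sym2 V))}
    (hT : G.TConnected ↑T) (hp : ¬(G.induce {v | v ≠ p}).Connected) :
    Fintype.card V - 2 ≤ T.card := by
  classical
  have hW : Nat.card {v : V | v ≠ p} = Fintype.card V - 1 := by
    rw [Nat.card_eq_fintype_card, Set.card_ne_eq]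
  suffices Nat.card {v : V | v ≠ p} ≤ T.card + 1 by omega
  cases isEmpty_or_nonempty {v : V | v ≠ p}
  · simp
  have hconn : (shortcutGraph ↑T p).Connected :=
    ⟨Preconnected.of_not_reachable_imp (fun h => hp ⟨h⟩) fun _ _ =>
      hT.reachable_shortcutGraph⟩
  exact hconn.card_vert_le_card_edgeSet_add_one.trans
    (Nat.add_le_add_right (card_edgeSet_shortcutGraph_le T p) 1)

end CutVertex

end SimpleGraph

theorem stmt10_general {V : Type*} [Fintype V] (G : SimpleGraph V)
    (hc : G.Connected)
    (p : V) (hp : ¬(G.induce {v : V | v ≠ p}).Connected) :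
    IsLeast {n : ℕ | ∃ T : Finset (Sym2 (Sym2 V)),
      G.ConnectingTransitionSet T ∧ T.card = n} (Fintype.card V - 2) := by
  obtain ⟨T, hT, hcard⟩ := hc.exists_connectingTransitionSet_card_le
  refine ⟨⟨T, hT, hcard.antisymm (hT.2.card_sub_two_le hp)⟩, ?_⟩
  rintro n ⟨T, hT, rfl⟩
  exact hT.2.card_sub_two_le hp

/-- If a connected graph `G` with at least 2 vertices has a cut vertex, then the
minimum size of a connecting transition set of `G` is exactly `|V(G)| − 2`. -/
theorem stmt10 {V : Type*} [Fintype V] [DecidableEq V] (G : SimpleGraph V)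
    (hc : G.Connected) (h2 : 2 ≤ Fintype.card V)
    (p : V) (hp : ¬(G.induce {v : V | v ≠ p}).Connected) :
    IsLeast {n : ℕ | ∃ T : Finset (Sym2 (Sym2 V)),
      G.ConnectingTransitionSet T ∧ T.card = n} (Fintype.card V - 2) :=
  stmt10_general G hc p hp
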